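/- Let n ≥ 1 and let f : ℝⁿ → ℝ be a positive C² function with Δf ≥ 0 everywhere. If f ∈ L^q(ℝⁿ) for some real number q > 1, i.e. ∫_{ℝⁿ} f^q dx < ∞, then f is constant. -/

import Mathlib

open MeasureTheory Filter

/-- The Laplacian of `f : ℝⁿ → ℝ`, defined as the trace of the Hessian. -/
noncomputable def euclideanLaplacian {n : ℕ} (f : EuclideanSpace ℝ (Fin n) → ℝ)
    (x : EuclideanSpace ℝ (Fin n)) : ℝ :=
  ∑ i : Fin n,
    iteratedFDeriv ℝ 2 f x ![EuclideanSpace.single i 1, EuclideanSpace.single i 1]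

section Aux

open Set


lemma pi_integral_fderiv_eq_zero {m : ℕ} (G : (Fin (m + 1) → ℝ) → ℝ)
    (hG : ContDiff ℝ 1 G) (hGs : HasCompactSupport G) (i : Fin (m + 1)) :
    ∫ x, fderiv ℝ G x (Pi.single i 1) = 0 := by
  classical
  obtain ⟨R, hR0, hR⟩ : ∃ R : ℝ, 0 < R ∧ tsupport G ⊆ Metric.ball 0 R := by
    obtain ⟨R, hR⟩ := hGs.isCompact.isBounded.subset_ball 0
    exact ⟨max R 1, by positivity, hR.trans (Metric.ball_subset_ball (le_max_left _ _))⟩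
  set a : Fin (m + 1) → ℝ := fun _ => -R
  set b : Fin (m + 1) → ℝ := fun _ => R
  have hle : a ≤ b := fun _ => by simp only [a, b]; linarith
  have hout : ∀ x : Fin (m + 1) → ℝ, (∃ j, ¬ |x j| < R) → x ∉ tsupport G := by
    intro x ⟨j, hj⟩ hx
    have := hR hx
    rw [Metric.mem_ball, dist_zero_right, pi_norm_lt_iff hR0] at this
    exact hj (by simpa using this j)
  have hfd : ∀ x, HasFDerivAt G (fderiv ℝ G x) x :=
    fun x => (hG.differentiable one_ne_zero x).hasFDerivAt
  have hcont : Continuous (fderiv ℝ G) := hG.continuous_fderiv one_ne_zero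
  have key := integral_divergence_of_hasFDerivAt_off_countable' a b hle
    (fun j => if j = i then G else 0)
    (fun j x => if j = i then fderiv ℝ G x else 0) ∅ countable_empty
    (fun j => by
      by_cases h : j = i <;> simp only [h, if_pos, if_neg, ite_true, ite_false]
      · exact hG.continuous.continuousOn
      · exact continuousOn_const)
    (fun x _ j => by
      by_cases h : j = i <;> simp only [h, ite_true, ite_false]
      · exact hfd x
      · exact hasFDerivAt_const (0:ℝ) x)
    (by
      apply ContinuousOn.integrableOn_compact isCompact_Icc
      apply Continuous.continuousOn
      apply continuous_finset_sum
      intro j _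
      by_cases h : j = i <;> simp only [h, ite_true, ite_false]
      · exact hcont.clm_apply continuous_const
      · exact continuous_const)
  have hsum : ∀ x, (∑ j, (if j = i then fderiv ℝ G x else 0) (Pi.single j (1:ℝ)))
      = fderiv ℝ G x (Pi.single i 1) := by
    intro x
    rw [Finset.sum_eq_single i] <;> simp +contextual
  rw [setIntegral_congr_fun measurableSet_Icc (fun x _ => hsum x)] at key
  have hface : ∀ (j : Fin (m + 1)) (c : ℝ), |c| = R →
      ∀ y : Fin m → ℝ, (if j = i then G else 0) ((Fin.insertNth j c y)) = 0 := by
    intro j c hc y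
    by_cases h : j = i <;> simp only [h, ite_true, ite_false]
    · refine image_eq_zero_of_notMem_tsupport (hout _ ⟨i, ?_⟩)
      subst h
      rw [Fin.insertNth_apply_same, hc]
      simp
    · rfl
  have h0 : (∫ x in Icc a b, fderiv ℝ G x (Pi.single i 1)) = 0 := by
    rw [key]
    apply Finset.sum_eq_zero
    intro j _
    have h1 : ∀ y ∈ Icc (a ∘ j.succAbove) (b ∘ j.succAbove),
        (fun k => if k = i then G else 0) j (Fin.insertNth j (b j) y) = (0:ℝ) :=
      fun y _ => hface j (b j) (by simp [b, abs_of_pos hR0]) y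
    have h2 : ∀ y ∈ Icc (a ∘ j.succAbove) (b ∘ j.succAbove),
        (fun k => if k = i then G else 0) j (Fin.insertNth j (a j) y) = (0:ℝ) :=
      fun y _ => hface j (a j) (by simp [a, abs_of_pos hR0]) y
    rw [setIntegral_congr_fun measurableSet_Icc h1, setIntegral_congr_fun measurableSet_Icc h2]
    simp
  rw [← h0]
  symm
  apply setIntegral_eq_integral_of_forall_compl_eq_zero
  intro x hx
  have hxt : x ∉ tsupport G := by
    apply hout
    by_contra h
    push_neg at h
    refine hx (Set.mem_Icc.2 ⟨fun j => ?_, fun j => ?_⟩)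
    · have := (abs_lt.1 (h j)).1; simpa [a] using this.le
    · have := (abs_lt.1 (h j)).2; simpa [b] using this.le
  have hz : fderiv ℝ G x = 0 := by
    by_contra h
    exact hxt (support_fderiv_subset ℝ (Function.mem_support.2 h))
  simp [hz]

lemma euclidean_integral_fderiv_eq_zero {m : ℕ} (G : EuclideanSpace ℝ (Fin (m + 1)) → ℝ)
    (hG : ContDiff ℝ 1 G) (hGs : HasCompactSupport G) (i : Fin (m + 1)) :
    ∫ x, fderiv ℝ G x (EuclideanSpace.single i 1) = 0 := by
  set L : (Fin (m + 1) → ℝ) ≃L[ℝ] EuclideanSpace ℝ (Fin (m + 1)) :=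
    (EuclideanSpace.equiv (Fin (m + 1)) ℝ).symm
  have hL : ∀ y, (MeasurableEquiv.toLp 2 (Fin (m + 1) → ℝ)).symm.symm y = L y := fun _ => rfl
  have hmp := (EuclideanSpace.volume_preserving_symm_measurableEquiv_toLp (Fin (m + 1))).symm
  have hint : ∫ x, fderiv ℝ G x (EuclideanSpace.single i 1)
      = ∫ y, fderiv ℝ G (L y) (EuclideanSpace.single i 1) := by
    rw [← hmp.integral_comp (MeasurableEquiv.toLp 2 (Fin (m + 1) → ℝ)).symm.symm.measurableEmbedding]
    simp only [hL]
  rw [hint]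
  have key := pi_integral_fderiv_eq_zero (G ∘ L) (hG.comp L.contDiff)
    (hGs.comp_homeomorph L.toHomeomorph) i
  rw [← key]
  congr 1
  funext y
  have hfd : HasFDerivAt (G ∘ L) ((fderiv ℝ G (L y)).comp (L : (Fin (m+1) → ℝ) →L[ℝ] _)) y :=
    ((hG.differentiable one_ne_zero (L y)).hasFDerivAt).comp y L.hasFDerivAt
  rw [hfd.fderiv]
  rfl

lemma young_ineq {ε w z : ℝ} (hε : 0 < ε) : -(2 * w * z) ≤ ε * w^2 + ε⁻¹ * z^2 := by
  have h1 : ε * ε⁻¹ = 1 := mul_inv_cancel₀ hε.ne'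
  have key : ε * (-(2 * w * z)) ≤ ε * (ε * w^2 + ε⁻¹ * z^2) := by
    nlinarith [sq_nonneg (ε * w + z)]
  exact le_of_mul_le_mul_left key hε

set_option maxHeartbeats 2000000 in
lemma caccioppoli {m : ℕ} (f : EuclideanSpace ℝ (Fin (m + 1)) → ℝ)
    (hf_pos : ∀ x, 0 < f x) (hf_C2 : ContDiff ℝ 2 f)
    (hf_sub : ∀ x, 0 ≤ euclideanLaplacian f x)
    (q : ℝ) (hq : 1 < q) (hI : Integrable (fun x => f x ^ q)) :
    ∃ C : ℝ, 0 ≤ C ∧ ∀ R : ℝ, 0 < R →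
      (∫ x in Metric.closedBall 0 R,
        (q - 1) * (f x ^ (q - 2) *
          ∑ i, (fderiv ℝ f x (EuclideanSpace.single i 1))^2)) ≤ C / R^2 := by
  have hq1 : (0:ℝ) < q - 1 := by linarith
  set eig : Fin (m + 1) → EuclideanSpace ℝ (Fin (m + 1)) := fun i => EuclideanSpace.single i (1:ℝ) with heig
  have heig_norm : ∀ i, ‖eig i‖ = 1 := fun i => by rw [heig]; simp [EuclideanSpace.norm_single]
  -- derivative notation
  have hfd1 : Differentiable ℝ f := hf_C2.differentiable two_ne_zero
  have hDfC1 : ContDiff ℝ 1 (fderiv ℝ f) := hf_C2.fderiv_right (le_refl 2)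
  have hDf_cont : Continuous (fderiv ℝ f) := hDfC1.continuous
  set D2 : EuclideanSpace ℝ (Fin (m + 1)) → _ →L[ℝ] _ →L[ℝ] ℝ := fun x => fderiv ℝ (fderiv ℝ f) x with hD2
  have hD2_cont : Continuous D2 := hDfC1.continuous_fderiv one_ne_zero
  have hD2d : ∀ x, HasFDerivAt (fderiv ℝ f) (D2 x) x :=
    fun x => (hDfC1.differentiable one_ne_zero x).hasFDerivAt
  have hLap : ∀ x, euclideanLaplacian f x = ∑ i, D2 x (eig i) (eig i) := by
    intro x
    unfold euclideanLaplacian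
    refine Finset.sum_congr rfl fun i _ => ?_
    rw [iteratedFDeriv_two_apply]
    simp [heig, hD2]
  -- the bump function
  set χ₀ : ContDiffBump (0 : EuclideanSpace ℝ (Fin (m + 1))) := ⟨1, 2, one_pos, one_lt_two⟩ with hχ₀
  have hbC : ContDiff ℝ 2 (χ₀ : EuclideanSpace ℝ (Fin (m + 1)) → ℝ) := χ₀.contDiff
  obtain ⟨M, hM0, hM⟩ : ∃ M : ℝ, 0 ≤ M ∧ ∀ y, ‖fderiv ℝ (χ₀ : EuclideanSpace ℝ (Fin (m + 1)) → ℝ) y‖ ≤ M := by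
    obtain ⟨M, hM⟩ := (χ₀.hasCompactSupport.fderiv (𝕜 := ℝ)).exists_bound_of_continuous
      (hbC.continuous_fderiv two_ne_zero)
    exact ⟨max M 0, le_max_right _ _, fun y => (hM y).trans (le_max_left _ _)⟩
  have hDχ₀_zero : ∀ y : EuclideanSpace ℝ (Fin (m + 1)), ¬ ‖y‖ ≤ 2 → fderiv ℝ (χ₀ : EuclideanSpace ℝ (Fin (m + 1)) → ℝ) y = 0 := by
    intro y hy
    by_contra h
    have := support_fderiv_subset ℝ (f := (χ₀ : EuclideanSpace ℝ (Fin (m + 1)) → ℝ)) (Function.mem_support.2 h)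
    rw [χ₀.tsupport_eq] at this
    exact hy (by simpa [hχ₀] using mem_closedBall_zero_iff.1 this)
  -- the rpow helpers
  have hrpow_cont : ∀ p : ℝ, Continuous (fun x => f x ^ p) := fun p =>
    hf_C2.continuous.rpow_const (fun x => Or.inl (hf_pos x).ne')
  have hrpow_C1 : ∀ p : ℝ, ContDiff ℝ 1 (fun x => f x ^ p) := by
    intro p
    rw [contDiff_iff_contDiffAt]
    exact fun x => (hf_C2.contDiffAt.of_le one_le_two).rpow_const_of_ne (hf_pos x).ne'
  have hrpow_d : ∀ (p : ℝ) (x), HasFDerivAt (fun y => f y ^ p)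
      ((p * f x ^ (p - 1)) • fderiv ℝ f x) x := by
    intro p x
    exact (Real.hasDerivAt_rpow_const (Or.inl (hf_pos x).ne')).comp_hasFDerivAt x
      (hfd1 x).hasFDerivAt
  set I := ∫ x, f x ^ q with hIdef
  have hI0 : 0 ≤ I := integral_nonneg fun x => Real.rpow_nonneg (hf_pos x).le q
  refine ⟨4 * (m + 1) * M^2 * I / (q - 1), by positivity, ?_⟩
  intro R hR
  -- scaled cutoff
  set χ : EuclideanSpace ℝ (Fin (m + 1)) → ℝ := fun x => χ₀ (R⁻¹ • x) with hχdef
  set Dχ : EuclideanSpace ℝ (Fin (m + 1)) → _ →L[ℝ] ℝ := fun x => R⁻¹ • fderiv ℝ (χ₀ : EuclideanSpace ℝ (Fin (m + 1)) → ℝ) (R⁻¹ • x) with hDχdef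
  have hχC : ContDiff ℝ 2 χ := hbC.comp (contDiff_id.const_smul R⁻¹)
  have hχd : ∀ x, HasFDerivAt χ (Dχ x) x := by
    intro x
    have h1 : HasFDerivAt (fun y : EuclideanSpace ℝ (Fin (m + 1)) => R⁻¹ • y)
        (R⁻¹ • ContinuousLinearMap.id ℝ (EuclideanSpace ℝ (Fin (m + 1)))) x := (hasFDerivAt_id x).const_smul R⁻¹
    have h2 := (hbC.differentiable two_ne_zero (R⁻¹ • x)).hasFDerivAt
    have h3 := h2.comp x h1
    refine h3.congr_fderiv ?_
    ext v
    simp [hDχdef, mul_comm]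
  have hχ_nonneg : ∀ x, 0 ≤ χ x := fun x => χ₀.nonneg
  have hχ_le_one : ∀ x, χ x ≤ 1 := fun x => χ₀.le_one
  have hχ_one : ∀ x, ‖x‖ ≤ R → χ x = 1 := by
    intro x hx
    apply χ₀.one_of_mem_closedBall
    rw [mem_closedBall_zero_iff, norm_smul, norm_inv, Real.norm_eq_abs, abs_of_pos hR]
    rw [inv_mul_le_iff₀ hR]
    simpa [hχ₀] using hx
  have hχ_zero : ∀ x, ¬ ‖x‖ ≤ 2 * R → χ x = 0 ∧ Dχ x = 0 := by
    intro x hx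
    have h2 : ¬ ‖R⁻¹ • x‖ ≤ 2 := by
      rw [norm_smul, norm_inv, Real.norm_eq_abs, abs_of_pos hR]
      intro h
      have := mul_le_mul_of_nonneg_left h hR.le
      rw [← mul_assoc, mul_inv_cancel₀ hR.ne', one_mul] at this
      exact hx (by linarith)
    constructor
    · have : R⁻¹ • x ∉ Function.support (χ₀ : EuclideanSpace ℝ (Fin (m + 1)) → ℝ) := by
        rw [χ₀.support_eq]
        intro h
        exact h2 (le_of_lt (by simpa [hχ₀] using mem_ball_zero_iff.1 h))
      simpa [hχdef] using Function.notMem_support.1 this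
    · simp [hDχdef, hDχ₀_zero _ h2]
  have hDχ_bound : ∀ x i, |Dχ x (eig i)| ≤ M / R := by
    intro x i
    have h1 : ‖Dχ x (eig i)‖ ≤ ‖Dχ x‖ * ‖eig i‖ := (Dχ x).le_opNorm _
    rw [heig_norm, mul_one] at h1
    refine (le_trans h1 ?_ : |Dχ x (eig i)| ≤ M / R)
    rw [hDχdef]
    calc ‖R⁻¹ • fderiv ℝ (χ₀ : EuclideanSpace ℝ (Fin (m + 1)) → ℝ) (R⁻¹ • x)‖
        = R⁻¹ * ‖fderiv ℝ (χ₀ : EuclideanSpace ℝ (Fin (m + 1)) → ℝ) (R⁻¹ • x)‖ := by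
          rw [norm_smul, norm_inv, Real.norm_eq_abs, abs_of_pos hR]
      _ ≤ R⁻¹ * M := by
          exact mul_le_mul_of_nonneg_left (hM _) (by positivity)
      _ = M / R := by rw [inv_mul_eq_div]
  -- the functions
  set φ : EuclideanSpace ℝ (Fin (m + 1)) → ℝ := fun x => f x ^ (q - 1) with hφdef
  set c : EuclideanSpace ℝ (Fin (m + 1)) → ℝ := fun x => (χ x * χ x) * φ x with hcdef
  set pd : Fin (m + 1) → EuclideanSpace ℝ (Fin (m + 1)) → ℝ :=
    fun i x => fderiv ℝ f x (eig i) with hpddef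
  set G : Fin (m + 1) → EuclideanSpace ℝ (Fin (m + 1)) → ℝ :=
    fun i x => c x * pd i x with hGdef
  have hφ_pos : ∀ x, 0 < φ x := fun x => Real.rpow_pos_of_pos (hf_pos x) _
  have hc_nonneg : ∀ x, 0 ≤ c x :=
    fun x => mul_nonneg (mul_nonneg (hχ_nonneg x) (hχ_nonneg x)) (hφ_pos x).le
  have hφd : ∀ x, HasFDerivAt φ (((q - 1) * f x ^ (q - 2)) • fderiv ℝ f x) x := by
    intro x
    have := hrpow_d (q - 1) x
    rwa [show q - 1 - 1 = q - 2 by ring] at this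
  set Dc : EuclideanSpace ℝ (Fin (m + 1)) → _ →L[ℝ] ℝ := fun x =>
    (χ x * χ x) • (((q - 1) * f x ^ (q - 2)) • fderiv ℝ f x)
      + φ x • (χ x • Dχ x + χ x • Dχ x) with hDcdef
  have hcd : ∀ x, HasFDerivAt c (Dc x) x := fun x => ((hχd x).mul (hχd x)).mul (hφd x)
  have hpdd : ∀ i x, HasFDerivAt (pd i)
      ((ContinuousLinearMap.apply ℝ ℝ (eig i)).comp (D2 x)) x :=
    fun i x => ((ContinuousLinearMap.apply ℝ ℝ (eig i)).hasFDerivAt).comp x (hD2d x)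
  have hGd : ∀ i x, HasFDerivAt (G i)
      (c x • ((ContinuousLinearMap.apply ℝ ℝ (eig i)).comp (D2 x)) + pd i x • Dc x) x :=
    fun i x => (hcd x).mul (hpdd i x)
  -- regularity
  have hφC1 : ContDiff ℝ 1 φ := hrpow_C1 (q - 1)
  have hχC1 : ContDiff ℝ 1 χ := hχC.of_le one_le_two
  have hcC1 : ContDiff ℝ 1 c := ((hχC1.mul hχC1)).mul hφC1
  have hpdC1 : ∀ i, ContDiff ℝ 1 (pd i) :=
    fun i => (ContinuousLinearMap.apply ℝ ℝ (eig i)).contDiff.comp hDfC1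
  have hGC1 : ∀ i, ContDiff ℝ 1 (G i) := fun i => hcC1.mul (hpdC1 i)
  have hGcs : ∀ i, HasCompactSupport (G i) := by
    intro i
    apply HasCompactSupport.intro (isCompact_closedBall (0:EuclideanSpace ℝ (Fin (m+1))) (2*R))
    intro x hx
    rw [mem_closedBall_zero_iff] at hx
    have := (hχ_zero x hx).1
    simp [hGdef, hcdef, this]
  clear_value G Dc c φ pd
  -- the scalar summands
  set a : Fin (m + 1) → EuclideanSpace ℝ (Fin (m + 1)) → ℝ :=
    fun i x => (q-1) * (χ x^2 * (f x ^ (q-2) * (pd i x)^2)) with hadef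
  set b : Fin (m + 1) → EuclideanSpace ℝ (Fin (m + 1)) → ℝ :=
    fun i x => c x * D2 x (eig i) (eig i) with hbdef
  set t : Fin (m + 1) → EuclideanSpace ℝ (Fin (m + 1)) → ℝ :=
    fun i x => 2 * (χ x * (φ x * (Dχ x (eig i) * pd i x))) with htdef
  set k : Fin (m + 1) → EuclideanSpace ℝ (Fin (m + 1)) → ℝ :=
    fun i x => (2/(q-1)) * (f x ^ q * (Dχ x (eig i))^2) with hkdef
  clear_value a b t k
  have hval : ∀ i x,
      (c x • ((ContinuousLinearMap.apply ℝ ℝ (eig i)).comp (D2 x)) + pd i x • Dc x) (eig i)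
        = b i x + (a i x + t i x) := by
    intro i x
    rw [hadef, hbdef, htdef, hcdef, hDcdef, hpddef, hφdef]
    simp only [ContinuousLinearMap.add_apply, ContinuousLinearMap.smul_apply,
      ContinuousLinearMap.comp_apply, ContinuousLinearMap.apply_apply, smul_eq_mul]
    rw [show f x ^ (q - 1) = f x ^ (q - 2) * f x by
      rw [show q - 1 = (q - 2) + 1 by ring, Real.rpow_add (hf_pos x), Real.rpow_one]]
    ring
  -- continuity of the pieces
  have hχ_cont : Continuous χ := hχC.continuous
  have hDχap_cont : ∀ i, Continuous (fun x => Dχ x (eig i)) := by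
    intro i
    have : Continuous Dχ := by
      rw [hDχdef]
      exact (((hbC.continuous_fderiv two_ne_zero)).comp
        (continuous_const_smul R⁻¹)).const_smul R⁻¹
    exact this.clm_apply continuous_const
  have hpd_cont : ∀ i, Continuous (pd i) := fun i => (hpdC1 i).continuous
  have hφ_cont : Continuous φ := hφC1.continuous
  have hc_cont : Continuous c := hcC1.continuous
  -- integrability of the pieces
  have inta : ∀ i, Integrable (a i) := by
    intro i
    apply Continuous.integrable_of_hasCompactSupport
    · simp only [hadef]
      exact continuous_const.mul ((hχ_cont.pow 2).mul ((hrpow_cont _).mul ((hpd_cont i).pow 2)))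
    · apply HasCompactSupport.intro (isCompact_closedBall (0:EuclideanSpace ℝ (Fin (m+1))) (2*R))
      intro x hx
      rw [mem_closedBall_zero_iff] at hx
      simp [hadef, (hχ_zero x hx).1]
  have intb : ∀ i, Integrable (b i) := by
    intro i
    apply Continuous.integrable_of_hasCompactSupport
    · simp only [hbdef]
      exact hc_cont.mul ((hD2_cont.clm_apply continuous_const).clm_apply continuous_const)
    · apply HasCompactSupport.intro (isCompact_closedBall (0:EuclideanSpace ℝ (Fin (m+1))) (2*R))
      intro x hx
      rw [mem_closedBall_zero_iff] at hx
      simp [hbdef, hcdef, (hχ_zero x hx).1]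
  have intt : ∀ i, Integrable (t i) := by
    intro i
    apply Continuous.integrable_of_hasCompactSupport
    · simp only [htdef]
      exact continuous_const.mul (hχ_cont.mul (hφ_cont.mul
        ((hDχap_cont i).mul (hpd_cont i))))
    · apply HasCompactSupport.intro (isCompact_closedBall (0:EuclideanSpace ℝ (Fin (m+1))) (2*R))
      intro x hx
      rw [mem_closedBall_zero_iff] at hx
      simp [htdef, (hχ_zero x hx).1]
  have intk : ∀ i, Integrable (k i) := by
    intro i
    apply Continuous.integrable_of_hasCompactSupport
    · simp only [hkdef]
      exact continuous_const.mul ((hrpow_cont _).mul ((hDχap_cont i).pow 2))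
    · apply HasCompactSupport.intro (isCompact_closedBall (0:EuclideanSpace ℝ (Fin (m+1))) (2*R))
      intro x hx
      rw [mem_closedBall_zero_iff] at hx
      simp [hkdef, (hχ_zero x hx).2]
  -- vanishing of the divergence integral
  have hint0 : ∀ i, ∫ x, (b i x + (a i x + t i x)) = 0 := by
    intro i
    have h := euclidean_integral_fderiv_eq_zero (G i) (hGC1 i) (hGcs i) i
    rw [← h]
    congr 1
    funext x
    rw [← hval i x, (hGd i x).fderiv]
  have intA : Integrable (fun x => ∑ i, a i x) := integrable_finset_sum _ (fun i _ => inta i)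
  have intB : Integrable (fun x => ∑ i, b i x) := integrable_finset_sum _ (fun i _ => intb i)
  have intT : Integrable (fun x => ∑ i, t i x) := integrable_finset_sum _ (fun i _ => intt i)
  have intK : Integrable (fun x => ∑ i, k i x) := integrable_finset_sum _ (fun i _ => intk i)
  have hsplit : (∫ x, ∑ i, b i x) + ((∫ x, ∑ i, a i x) + (∫ x, ∑ i, t i x)) = 0 := by
    have int1 : ∀ i : Fin (m+1), Integrable (fun x => b i x + (a i x + t i x)) :=
      fun i => (intb i).add ((inta i).add (intt i))
    have h2 : ∫ x, ∑ i, (b i x + (a i x + t i x)) = 0 := by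
      rw [integral_finset_sum (f := fun i x => b i x + (a i x + t i x)) Finset.univ
        (fun i _ => int1 i)]
      exact Finset.sum_eq_zero fun i _ => hint0 i
    have h4 : (fun x => ∑ i, (b i x + (a i x + t i x)))
        = fun x => (∑ i, b i x) + ((∑ i, a i x) + (∑ i, t i x)) :=
      funext fun x => by rw [Finset.sum_add_distrib, Finset.sum_add_distrib]
    have intAT : Integrable (fun x => (∑ i, a i x) + (∑ i, t i x)) := intA.add intT
    rw [h4, integral_add intB intAT, integral_add intA intT] at h2
    exact h2
  have hIB : 0 ≤ ∫ x, ∑ i, b i x := by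
    refine integral_nonneg fun x => ?_
    show (0:ℝ) ≤ ∑ i, b i x
    have e : ∑ i, b i x = c x * euclideanLaplacian f x := by
      rw [hLap x, Finset.mul_sum]
      exact Finset.sum_congr rfl fun i _ => by rw [hbdef]
    rw [e]
    exact mul_nonneg (hc_nonneg x) (hf_sub x)
  have ha_nonneg : ∀ x, 0 ≤ ∑ i, a i x := by
    intro x
    apply Finset.sum_nonneg
    intro i _
    simp only [hadef]
    have h := Real.rpow_nonneg (hf_pos x).le (q - 2)
    exact mul_nonneg hq1.le (mul_nonneg (sq_nonneg _) (mul_nonneg h (sq_nonneg _)))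
  -- Young's inequality pointwise
  have hs1 : ∀ x, f x ^ (q - 1) = f x ^ (q - 2) * f x := by
    intro x
    rw [show q - 1 = (q - 2) + 1 by ring, Real.rpow_add (hf_pos x), Real.rpow_one]
  have hs2 : ∀ x, f x ^ q = f x ^ (q - 2) * (f x * f x) := by
    intro x
    rw [← pow_two, ← Real.rpow_natCast (f x) 2, ← Real.rpow_add (hf_pos x)]
    norm_num
  have hpt : ∀ x, -(∑ i, t i x) ≤ (1/2) * (∑ i, a i x) + ∑ i, k i x := by
    intro x
    rw [Finset.mul_sum, ← Finset.sum_add_distrib, ← Finset.sum_neg_distrib]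
    apply Finset.sum_le_sum
    intro i _
    rw [htdef, hadef, hkdef, hφdef]
    have hy := young_ineq (ε := (q-1)/2) (w := χ x * pd i x)
      (z := f x * Dχ x (eig i)) (by linarith)
    calc -(2 * (χ x * (f x ^ (q - 1) * (Dχ x (eig i) * pd i x))))
        = f x ^ (q - 2) * (-(2 * (χ x * pd i x) * (f x * Dχ x (eig i)))) := by
          rw [hs1 x]; ring
      _ ≤ f x ^ (q - 2) * ((q-1)/2 * (χ x * pd i x)^2
            + ((q-1)/2)⁻¹ * (f x * Dχ x (eig i))^2) :=
          mul_le_mul_of_nonneg_left hy (Real.rpow_nonneg (hf_pos x).le _)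
      _ = 1/2 * ((q-1) * (χ x^2 * (f x ^ (q-2) * (pd i x)^2)))
            + (2/(q-1)) * (f x ^ q * (Dχ x (eig i))^2) := by
          rw [inv_div, hs2 x]; ring
  have hTle : -(∫ x, ∑ i, t i x) ≤ (1/2) * (∫ x, ∑ i, a i x) + ∫ x, ∑ i, k i x := by
    have intTneg : Integrable (fun x => -(∑ i, t i x)) := intT.neg
    have intAK : Integrable (fun x => 1/2 * (∑ i, a i x) + ∑ i, k i x) :=
      (intA.const_mul (1/2)).add intK
    have h := integral_mono intTneg intAK hpt
    rwa [integral_neg, integral_add (intA.const_mul (1/2)) intK,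
      integral_const_mul] at h
  have hKle : (∫ x, ∑ i, k i x) ≤ ((2/(q-1)) * ((m+1) * ((M/R)^2))) * I := by
    have hptk : ∀ x, ∑ i, k i x ≤ ((2/(q-1)) * ((m+1) * ((M/R)^2))) * f x ^ q := by
      intro x
      calc ∑ i, k i x ≤ ∑ _i : Fin (m+1), (2/(q-1)) * (f x ^ q * (M/R)^2) := by
            apply Finset.sum_le_sum
            intro i _
            rw [hkdef]
            have h1 : (Dχ x (eig i))^2 ≤ (M/R)^2 := by
              have := hDχ_bound x i
              exact sq_le_sq' (by linarith [(abs_le.1 this).1]) (abs_le.1 this).2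
            have h2 : (0:ℝ) ≤ 2/(q-1) := by positivity
            have h3 := Real.rpow_nonneg (hf_pos x).le q
            exact mul_le_mul_of_nonneg_left (mul_le_mul_of_nonneg_left h1 h3) h2
        _ = ((2/(q-1)) * ((m+1) * ((M/R)^2))) * f x ^ q := by
            rw [Finset.sum_const, Finset.card_univ, Fintype.card_fin, nsmul_eq_mul]
            push_cast
            ring
    calc (∫ x, ∑ i, k i x)
        ≤ ∫ x, ((2/(q-1)) * ((m+1) * ((M/R)^2))) * f x ^ q :=
          integral_mono intK (hI.const_mul _) hptk
      _ = ((2/(q-1)) * ((m+1) * ((M/R)^2))) * I := integral_const_mul _ _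
  have hIA : (∫ x, ∑ i, a i x) ≤ (4 * (m+1) * M^2 * I / (q - 1)) / R^2 := by
    have h1 : (∫ x, ∑ i, a i x) ≤ 2 * (((2/(q-1)) * ((m+1) * ((M/R)^2))) * I) := by
      linarith
    have h2 : 2 * (((2/(q-1)) * ((m+1) * ((M/R)^2))) * I)
        = (4 * (m+1) * M^2 * I / (q - 1)) / R^2 := by
      field_simp
      ring
    linarith
  -- restrict to the ball where χ = 1
  have hgA : ∀ x ∈ Metric.closedBall (0 : EuclideanSpace ℝ (Fin (m+1))) R,
      (q - 1) * (f x ^ (q - 2) * ∑ i, (fderiv ℝ f x (eig i))^2) = ∑ i, a i x := by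
    intro x hx
    rw [mem_closedBall_zero_iff] at hx
    have h1 := hχ_one x hx
    have e : ∀ i : Fin (m+1), a i x = ((q-1) * (f x ^ (q-2))) * (fderiv ℝ f x (eig i))^2 :=
      fun i => by simp only [hadef, hpddef, h1]; ring
    rw [Finset.sum_congr rfl (fun i _ => e i), ← Finset.mul_sum]
    ring
  calc (∫ x in Metric.closedBall 0 R,
        (q - 1) * (f x ^ (q - 2) * ∑ i, (fderiv ℝ f x (eig i))^2))
      = ∫ x in Metric.closedBall 0 R, ∑ i, a i x :=
        setIntegral_congr_fun measurableSet_closedBall (fun x hx => hgA x hx)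
    _ ≤ ∫ x, ∑ i, a i x :=
        setIntegral_le_integral intA (Filter.Eventually.of_forall ha_nonneg)
    _ ≤ (4 * (m+1) * M^2 * I / (q - 1)) / R^2 := hIA

end Aux

/-- A positive `C²` function on `ℝⁿ` with `Δf ≥ 0` everywhere which lies in `L^q(ℝⁿ)` for
some `q > 1` (i.e. `∫_{ℝⁿ} f^q dx < ∞`) must be constant. -/
theorem euclidean_subharmonic_Lq_constant
    {n : ℕ} (hn : 1 ≤ n) (f : EuclideanSpace ℝ (Fin n) → ℝ)
    (hf_pos : ∀ x, 0 < f x) (hf_C2 : ContDiff ℝ 2 f)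
    (hf_sub : ∀ x, 0 ≤ euclideanLaplacian f x)
    (q : ℝ) (hq : 1 < q)
    (hf_Lq : (∫⁻ x, ENNReal.ofReal (f x ^ q)) < ⊤) :
    ∃ c : ℝ, ∀ x, f x = c := by
  obtain ⟨m, rfl⟩ : ∃ m, n = m + 1 := ⟨n - 1, (Nat.succ_pred_eq_of_pos hn).symm⟩
  have hq1 : (0:ℝ) < q - 1 := by linarith
  have hfd1 : Differentiable ℝ f := hf_C2.differentiable two_ne_zero
  have hDfC1 : ContDiff ℝ 1 (fderiv ℝ f) := hf_C2.fderiv_right (le_refl 2)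
  have hcont_fq : Continuous fun x => f x ^ q :=
    hf_C2.continuous.rpow_const fun x => Or.inl (hf_pos x).ne'
  have hI : Integrable (fun x => f x ^ q) := by
    refine ⟨hcont_fq.aestronglyMeasurable, ?_⟩
    rw [hasFiniteIntegral_iff_ofReal
      (Eventually.of_forall fun x => Real.rpow_nonneg (hf_pos x).le q)]
    exact hf_Lq
  obtain ⟨C, hC0, hC⟩ := caccioppoli f hf_pos hf_C2 hf_sub q hq hI
  set g : EuclideanSpace ℝ (Fin (m+1)) → ℝ := fun x =>
    (q - 1) * (f x ^ (q - 2) *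
      ∑ i, (fderiv ℝ f x (EuclideanSpace.single i 1))^2) with hgdef
  have hg_cont : Continuous g := by
    apply continuous_const.mul
    apply Continuous.mul
    · exact hf_C2.continuous.rpow_const fun x => Or.inl (hf_pos x).ne'
    · exact continuous_finset_sum _ fun i _ =>
        (hDfC1.continuous.clm_apply continuous_const).pow 2
  have hg_nonneg : ∀ x, 0 ≤ g x := fun x =>
    mul_nonneg hq1.le (mul_nonneg (Real.rpow_nonneg (hf_pos x).le _)
      (Finset.sum_nonneg fun i _ => sq_nonneg _))
  have hg0 : ∀ x, g x = 0 := by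
    intro x₀
    by_contra hne
    have hgx : 0 < g x₀ := (hg_nonneg x₀).lt_of_ne (Ne.symm hne)
    obtain ⟨r, hr, hball⟩ : ∃ r > 0, ∀ y ∈ Metric.closedBall x₀ r, g x₀ / 2 ≤ g y := by
      have hca := hg_cont.continuousAt (x := x₀)
      rw [Metric.continuousAt_iff] at hca
      obtain ⟨ε, hε, h⟩ := hca (g x₀ / 2) (by linarith)
      refine ⟨ε/2, by linarith, fun y hy => ?_⟩
      have h2 := h (lt_of_le_of_lt (Metric.mem_closedBall.1 hy) (by linarith))
      rw [Real.dist_eq] at h2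
      have := (abs_lt.1 h2).1
      linarith
    set v := (volume (Metric.closedBall x₀ r)).toReal with hvdef
    have hv : 0 < v := by
      apply ENNReal.toReal_pos
      · refine ne_of_gt (lt_of_lt_of_le (Metric.measure_ball_pos volume x₀ hr) ?_)
        exact measure_mono Metric.ball_subset_closedBall
      · exact (measure_closedBall_lt_top).ne
    set δ := g x₀ / 2 * v with hδdef
    have hδ : 0 < δ := mul_pos (by linarith) hv
    have key : ∀ R : ℝ, ‖x₀‖ + r ≤ R → δ ≤ C / R^2 := by
      intro R hRge
      have hRpos : 0 < R := lt_of_lt_of_le (by positivity) hRge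
      have hsub : Metric.closedBall x₀ r ⊆
          Metric.closedBall (0 : EuclideanSpace ℝ (Fin (m+1))) R := by
        intro y hy
        rw [Metric.mem_closedBall] at hy ⊢
        calc dist y 0 ≤ dist y x₀ + dist x₀ 0 := dist_triangle _ _ _
          _ ≤ r + ‖x₀‖ := by rw [dist_zero_right]; linarith
          _ ≤ R := by linarith
      have hIntOn : IntegrableOn g
          (Metric.closedBall (0 : EuclideanSpace ℝ (Fin (m+1))) R) :=
        hg_cont.continuousOn.integrableOn_compact (isCompact_closedBall _ _)
      calc δ = g x₀ / 2 * v := hδdef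
        _ ≤ ∫ y in Metric.closedBall x₀ r, g y :=
            by
              have h := setIntegral_ge_of_const_le measurableSet_closedBall measure_closedBall_lt_top.ne hball (hIntOn.mono_set hsub); rw [smul_eq_mul, mul_comm] at h; exact h
        _ ≤ ∫ y in Metric.closedBall 0 R, g y :=
            setIntegral_mono_set hIntOn
              (Eventually.of_forall fun y => hg_nonneg y) (HasSubset.Subset.eventuallyLE hsub)
        _ ≤ C / R^2 := hC R hRpos
    set R := max (‖x₀‖ + r) (Real.sqrt (C / δ) + 1) with hRdef
    have h1 : ‖x₀‖ + r ≤ R := le_max_left _ _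
    have h2 : Real.sqrt (C/δ) + 1 ≤ R := le_max_right _ _
    have h3 : C / δ < R^2 := by
      calc C/δ = Real.sqrt (C/δ)^2 := (Real.sq_sqrt (by positivity)).symm
        _ < R^2 := by nlinarith [Real.sqrt_nonneg (C/δ)]
    have h4 := key R h1
    have h5 : C / R^2 < δ := by
      have hR2 : (0:ℝ) < R^2 := by positivity
      rw [div_lt_iff₀ hR2]
      calc C = δ * (C/δ) := by field_simp
        _ < δ * R^2 := mul_lt_mul_of_pos_left h3 hδ
    linarith
  have hDf0 : ∀ x, fderiv ℝ f x = 0 := by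
    intro x
    have hx0 := hg0 x
    simp only [hgdef] at hx0
    have hfp : f x ^ (q-2) ≠ 0 := (Real.rpow_pos_of_pos (hf_pos x) (q-2)).ne'
    have hsum : ∑ i, (fderiv ℝ f x (EuclideanSpace.single i 1))^2 = 0 := by
      rcases mul_eq_zero.1 hx0 with h | h
      · exact absurd h (by linarith)
      · rcases mul_eq_zero.1 h with h' | h'
        · exact absurd h' hfp
        · exact h'
    have hcomp : ∀ i, fderiv ℝ f x (EuclideanSpace.single i 1) = 0 := by
      intro i
      have h := (Finset.sum_eq_zero_iff_of_nonneg (fun i _ => sq_nonneg _)).1 hsum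
        i (Finset.mem_univ i)
      exact pow_eq_zero_iff two_ne_zero |>.1 h
    have hlin : (fderiv ℝ f x : EuclideanSpace ℝ (Fin (m+1)) →ₗ[ℝ] ℝ)
        = (0 : EuclideanSpace ℝ (Fin (m+1)) →ₗ[ℝ] ℝ) := by
      apply (EuclideanSpace.basisFun (Fin (m+1)) ℝ).toBasis.ext
      intro i
      rw [OrthonormalBasis.coe_toBasis, EuclideanSpace.basisFun_apply]
      simp [hcomp i]
    exact ContinuousLinearMap.coe_injective hlin
  exact ⟨f 0, fun x => is_const_of_fderiv_eq_zero hfd1 hDf0 x 0⟩
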